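/- Let σ ∈ H. If (z,w) ∈ ℂ^n × ℂ lies on the real hyperquadric Q, i.e. Im w = ⟨z,z⟩, and 1 + δ_σ(z,w) ≠ 0, then φ_σ(z,w) ∈ Q, i.e. writing (z*,w*) = φ_σ(z,w) one has Im w* = ⟨z*,z*⟩. -/

import Mathlib

open Complex Matrix

/-- The Hermitian form `⟨z,ζ⟩ = Σ_{α<e} z^α conj(ζ^α) − Σ_{α≥e} z^α conj(ζ^α)`
of signature `(e, n-e)` on `ℂ^n`. -/
noncomputable def herm (n e : ℕ) (z ζ : Fin n → ℂ) : ℂ :=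
  ∑ α : Fin n, (if (α : ℕ) < e then (1 : ℂ) else -1) * z α * (starRingEnd ℂ) (ζ α)

/-- `δ_σ(z,w) = 2i⟨z,a⟩ − (r + i⟨a,a⟩)w` for `σ = (C,a,ρ,r)`. -/
noncomputable def deltaSigma (n e : ℕ) (a : Fin n → ℂ) (r : ℝ) (z : Fin n → ℂ) (w : ℂ) : ℂ :=
  2 * Complex.I * herm n e z a - ((r : ℂ) + Complex.I * herm n e a a) * w

/-- The fractional linear map `φ_σ(z,w) = (C(z − aw)/(1+δ_σ), ρw/(1+δ_σ))`. -/
noncomputable def phiSigma (n e : ℕ) (C : Matrix (Fin n) (Fin n) ℂ) (a : Fin n → ℂ)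
    (ρ r : ℝ) (p : (Fin n → ℂ) × ℂ) : (Fin n → ℂ) × ℂ :=
  ((1 + deltaSigma n e a r p.1 p.2)⁻¹ • C.mulVec (p.1 - p.2 • a),
    (ρ : ℂ) * p.2 / (1 + deltaSigma n e a r p.1 p.2))

lemma herm_conj (n e : ℕ) (z ζ : Fin n → ℂ) :
    (starRingEnd ℂ) (herm n e z ζ) = herm n e ζ z := by
  simp only [herm, _root_.map_sum]
  refine Finset.sum_congr rfl fun α _ => ?_
  simp only [_root_.map_mul, Complex.conj_conj]
  split_ifs <;> simp <;> ring

lemma herm_smul (n e : ℕ) (s : ℂ) (u : Fin n → ℂ) :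
    herm n e (s • u) (s • u) = s * (starRingEnd ℂ) s * herm n e u u := by
  simp only [herm, Pi.smul_apply, smul_eq_mul, Finset.mul_sum, _root_.map_mul]
  exact Finset.sum_congr rfl fun α _ => by ring

lemma herm_expand (n e : ℕ) (z a : Fin n → ℂ) (w : ℂ) :
    herm n e (z - w • a) (z - w • a)
      = herm n e z z - (starRingEnd ℂ) w * herm n e z a - w * herm n e a z
        + w * (starRingEnd ℂ) w * herm n e a a := by
  simp only [herm, Pi.sub_apply, Pi.smul_apply, smul_eq_mul, Finset.mul_sum,
    ← Finset.sum_sub_distrib, ← Finset.sum_add_distrib]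
  refine Finset.sum_congr rfl fun α _ => ?_
  simp only [_root_.map_sub, _root_.map_mul]
  ring



/-- If `(z,w)` lies on the real hyperquadric `Im w = ⟨z,z⟩` and
`1 + δ_σ(z,w) ≠ 0`, then `φ_σ(z,w)` also lies on the hyperquadric. -/
theorem stmt1 (n e : ℕ) (hn : 1 ≤ n) (he1 : n ≤ 2 * e) (he2 : e ≤ n)
    (C : Matrix (Fin n) (Fin n) ℂ) (a : Fin n → ℂ) (ρ r : ℝ)
    (hC : IsUnit C) (hρ : ρ ≠ 0)
    (hCρ : ∀ z : Fin n → ℂ, herm n e (C.mulVec z) (C.mulVec z) = (ρ : ℂ) * herm n e z z)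
    (z : Fin n → ℂ) (w : ℂ)
    (hQ : (w.im : ℂ) = herm n e z z)
    (hδ : 1 + deltaSigma n e a r z w ≠ 0) :
    (((phiSigma n e C a ρ r (z, w)).2.im : ℂ))
      = herm n e (phiSigma n e C a ρ r (z, w)).1 (phiSigma n e C a ρ r (z, w)).1 := by
  have hconjd : (starRingEnd ℂ) (1 + deltaSigma n e a r z w) ≠ 0 := by
    simpa using star_ne_zero.2 hδ
  simp only [phiSigma]
  rw [herm_smul, hCρ, herm_expand]
  set d := 1 + deltaSigma n e a r z w with hd
  have hdval : d = 1 + 2 * Complex.I * herm n e z a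
      - ((r : ℂ) + Complex.I * herm n e a a) * w := by
    rw [hd, deltaSigma]; ring
  have hdconj : (starRingEnd ℂ) d
      = 1 - 2 * Complex.I * herm n e a z
        - ((r : ℂ) - Complex.I * herm n e a a) * (starRingEnd ℂ) w := by
    simp only [hd, deltaSigma, map_add, _root_.map_sub, _root_.map_mul, _root_.map_one,
      Complex.conj_I, Complex.conj_ofReal, map_ofNat, herm_conj]
    ring
  have hw : w - (starRingEnd ℂ) w = 2 * Complex.I * herm n e z z := by
    rw [Complex.sub_conj, ← hQ]; push_cast; ring
  have hzz : herm n e z z = (w - (starRingEnd ℂ) w) / (2 * Complex.I) := by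
    rw [hw]; field_simp
  have him : (((ρ : ℂ) * w / d).im : ℂ)
      = ((ρ : ℂ) * w / d - (starRingEnd ℂ) ((ρ : ℂ) * w / d)) / (2 * Complex.I) := by
    rw [Complex.sub_conj]
    field_simp
    push_cast
    ring
  rw [him, map_div₀, _root_.map_mul, Complex.conj_ofReal, map_inv₀, hzz, hdconj, hdval]
  have hd1 : (1 : ℂ) + 2 * Complex.I * herm n e z a
      - ((r : ℂ) + Complex.I * herm n e a a) * w ≠ 0 := by rw [← hdval]; exact hδ
  have hd2 : (1 : ℂ) - 2 * Complex.I * herm n e a z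
      - ((r : ℂ) - Complex.I * herm n e a a) * (starRingEnd ℂ) w ≠ 0 := by
    rw [← hdconj]; exact hconjd
  generalize hD1 : (1 : ℂ) + 2 * Complex.I * herm n e z a
      - ((r : ℂ) + Complex.I * herm n e a a) * w = D1 at *
  generalize hD2 : (1 : ℂ) - 2 * Complex.I * herm n e a z
      - ((r : ℂ) - Complex.I * herm n e a a) * (starRingEnd ℂ) w = D2 at *
  field_simp
  rw [← hD1, ← hD2]
  ring
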